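/- arXiv:0806.0082 — 2 statements merged into one kernel-verified Lean document; each statement's English description precedes it below -/
import Mathlib

section
/- Let z ∈ ℝ³, s ≥ 0, a ≥ 0, and let u_∥, u_⊥ ∈ ℝ³ with u_∥ · u_⊥ = 0, and let ω ∈ ℝ³ be a unit vector with u_∥ · ω ≥ 0. Then |z - s·u_∥|² + |z - s·u_⊥ + aω|² ≥ |z|² + |z - s(u_∥ + u_⊥) + aω|². -/
open RealInnerProductSpace

abbrev E3 : Type := EuclideanSpace ℝ (Fin 3)

/- Expanding the squares, the difference of the two sides is `2 ⟪a • ω - s • u_⊥, s • u_∥⟫`,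
which is `2 a s ⟪ω, u_∥⟫ ≥ 0` by orthogonality of `u_∥` and `u_⊥`. -/

theorem norm_sub_sq_add_norm_sq {F : Type*} [NormedAddCommGroup F] [InnerProductSpace ℝ F]
    (x y p : F) :
    ‖x - p‖ ^ 2 + ‖y‖ ^ 2 = ‖x‖ ^ 2 + ‖y - p‖ ^ 2 + 2 * ⟪y - x, p⟫ := by
  rw [norm_sub_sq_real, norm_sub_sq_real, inner_sub_left]
  ring

theorem gain_geometric_inequality_minus_general (z upar uperp ω : E3) (s a : ℝ)
    (hs : 0 ≤ s) (ha : 0 ≤ a)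
    (horth : ⟪upar, uperp⟫ = 0)
    (hpo : 0 ≤ ⟪upar, ω⟫) :
    ‖z - s • upar‖ ^ 2 + ‖z - s • uperp + a • ω‖ ^ 2 ≥
      ‖z‖ ^ 2 + ‖z - s • (upar + uperp) + a • ω‖ ^ 2 := by
  have hsplit : z - s • (upar + uperp) + a • ω = (z - s • uperp + a • ω) - s • upar := by
    module
  have hcross : ⟪(z - s • uperp + a • ω) - z, s • upar⟫ = a * s * ⟪upar, ω⟫ := by
    rw [show z - s • uperp + a • ω - z = a • ω - s • uperp by abel, inner_sub_left,
      inner_smul_left, inner_smul_left, inner_smul_right, inner_smul_right,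
      real_inner_comm upar uperp, real_inner_comm upar ω, horth]
    simp only [RCLike.conj_to_real]
    ring
  rw [hsplit, ge_iff_le, norm_sub_sq_add_norm_sq, hcross]
  have hcross_nonneg : 0 ≤ a * s * ⟪upar, ω⟫ := by positivity
  linarith

theorem gain_geometric_inequality_minus (z upar uperp ω : E3) (s a : ℝ)
    (hs : 0 ≤ s) (ha : 0 ≤ a)
    (horth : ⟪upar, uperp⟫ = 0)
    (hω : ‖ω‖ = 1)
    (hpo : 0 ≤ ⟪upar, ω⟫) :
    ‖z - s • upar‖ ^ 2 + ‖z - s • uperp + a • ω‖ ^ 2 ≥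
      ‖z‖ ^ 2 + ‖z - s • (upar + uperp) + a • ω‖ ^ 2 :=
  gain_geometric_inequality_minus_general z upar uperp ω s a hs ha horth hpo
end

section
/- Let q > 0 and z ∈ ℝ³. Then ∫_{ℝ³} |u|^{-1} e^{-q|z-u|²} du ≤ 4π + π/q^{3/2}. -/
open Real MeasureTheory

/-!
By the layer-cake formula the integral is an integral over the superlevel sets of the
Gaussian, which are balls centred at `z`. Moving such a ball to the origin trades points where
the radially decreasing weight `1/|u|` is at most `1/r` for an equal volume of points where it is
at least `1/r`, so the integral is largest at `z = 0`. There polar coordinates give `2π/q`, and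
`2π/q ≤ 4π + π/q^{3/2}` since `4s³ - 2s + 1 > 0` for `s = √q`.
-/

open Set Filter Module
open scoped ENNReal

theorem setLIntegral_le_setLIntegral_of_measure_eq {α : Type*} [MeasurableSpace α]
    {μ : Measure α} {f : α → ℝ≥0∞} {s t : Set α} (hs : MeasurableSet s) (ht : MeasurableSet t)
    (hst : μ s = μ t) (ht_fin : μ t ≠ ∞) (hf : ∀ x ∈ s \ t, ∀ y ∈ t \ s, f x ≤ f y) :
    ∫⁻ x in s, f x ∂μ ≤ ∫⁻ x in t, f x ∂μ := by
  set c := ⨅ y ∈ t \ s, f y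
  have hdiff : μ (s \ t) = μ (t \ s) :=
    measure_sdiff_symm hs.nullMeasurableSet ht.nullMeasurableSet hst
      (measure_ne_top_of_subset inter_subset_right ht_fin)
  calc ∫⁻ x in s, f x ∂μ = ∫⁻ x in s ∩ t, f x ∂μ + ∫⁻ x in s \ t, f x ∂μ :=
        (lintegral_inter_add_sdiff f s ht).symm
    _ ≤ ∫⁻ x in s ∩ t, f x ∂μ + ∫⁻ _ in s \ t, c ∂μ := by
        gcongr ∫⁻ x in s ∩ t, f x ∂μ + ?_
        exact setLIntegral_mono' (hs.diff ht) fun x hx ↦ le_iInf₂ (hf x hx)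
    _ = ∫⁻ x in t ∩ s, f x ∂μ + ∫⁻ _ in t \ s, c ∂μ := by
        rw [setLIntegral_const, setLIntegral_const, hdiff, inter_comm]
    _ ≤ ∫⁻ x in t ∩ s, f x ∂μ + ∫⁻ x in t \ s, f x ∂μ := by
        gcongr ∫⁻ x in t ∩ s, f x ∂μ + ?_
        exact setLIntegral_mono' (ht.diff hs) fun y hy ↦ iInf₂_le y hy
    _ = ∫⁻ x in t, f x ∂μ := lintegral_inter_add_sdiff f t hs

def RadiallyAntitone {E β : Type*} [Norm E] [Preorder β] (f : E → β) : Prop :=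
  ∀ ⦃x y : E⦄, ‖x‖ ≤ ‖y‖ → f y ≤ f x

section Rearrangement

variable {E : Type*} [NormedAddCommGroup E] [MeasurableSpace E] [BorelSpace E]
  {μ : Measure E} [μ.IsAddRightInvariant]

theorem lintegral_mul_comp_sub_le_of_radiallyAntitone {f : E → ℝ≥0∞} {g : E → ℝ}
    (hf : RadiallyAntitone f) (hf_meas : Measurable f) (hg : RadiallyAntitone g)
    (hg_meas : Measurable g) (hg_nonneg : 0 ≤ g) (hg_int : Integrable g μ) (z : E) :
    ∫⁻ u, f u * ENNReal.ofReal (g (u - z)) ∂μ ≤ ∫⁻ u, f u * ENNReal.ofReal (g u) ∂μ := by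
  set ν := μ.withDensity f
  have layer_cake (w : E) :
      ∫⁻ u, f u * ENNReal.ofReal (g (u - w)) ∂μ = ∫⁻ t in Ioi 0, ν {u | t < g (u - w)} := by
    have hgw : Measurable fun u ↦ g (u - w) := hg_meas.comp (measurable_sub_const w)
    have := lintegral_withDensity_eq_lintegral_mul μ hf_meas hgw.ennreal_ofReal
    simp only [Pi.mul_apply] at this
    rw [← this]
    exact lintegral_eq_lintegral_meas_lt ν (.of_forall fun u ↦ hg_nonneg (u - w)) hgw.aemeasurable
  have superlevel_le (t : ℝ) (ht : 0 < t) : ν {u | t < g (u - z)} ≤ ν {u | t < g u} := by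
    have hS : MeasurableSet {u | t < g u} := measurableSet_lt measurable_const hg_meas
    have hpre : {u | t < g (u - z)} = (· + -z) ⁻¹' {u | t < g u} := by
      ext u; simp [sub_eq_add_neg]
    rw [hpre, withDensity_apply _ hS, withDensity_apply _ (measurable_add_const _ hS)]
    refine setLIntegral_le_setLIntegral_of_measure_eq (measurable_add_const _ hS) hS
      (measure_preimage_add_right μ _ _) (hg_int.measure_gt_lt_top ht).ne ?_
    rintro x ⟨-, hx⟩ y ⟨hy, -⟩
    exact hf (not_le.1 fun hxy ↦ hx (hy.trans_le (hg hxy))).le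
  calc ∫⁻ u, f u * ENNReal.ofReal (g (u - z)) ∂μ = ∫⁻ t in Ioi 0, ν {u | t < g (u - z)} :=
        layer_cake z
    _ ≤ ∫⁻ t in Ioi 0, ν {u | t < g u} := setLIntegral_mono' measurableSet_Ioi superlevel_le
    _ = ∫⁻ u, f u * ENNReal.ofReal (g u) ∂μ := by simpa using (layer_cake 0).symm

end Rearrangement

section HaarMeasure

variable {E : Type*} [NormedAddCommGroup E] [NormedSpace ℝ E] [Nontrivial E]
  [FiniteDimensional ℝ E] [MeasurableSpace E] [BorelSpace E] (μ : Measure E) [μ.IsAddHaarMeasure]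

theorem integrable_exp_neg_mul_norm_sq {q : ℝ} (hq : 0 < q) :
    Integrable (fun u : E ↦ exp (-q * ‖u‖ ^ 2)) μ := by
  rw [integrable_fun_norm_addHaar μ (f := fun y ↦ exp (-q * y ^ 2))]
  refine (integrableOn_rpow_mul_exp_neg_mul_sq hq (s := (finrank ℝ E - 1 : ℕ)) ?_).congr_fun
    (fun y (hy : 0 < y) ↦ by simp [rpow_natCast]) measurableSet_Ioi
  have := (Nat.cast_nonneg (α := ℝ) (finrank ℝ E - 1))
  linarith

theorem lintegral_inv_norm_mul_exp_neg_mul_norm_sub_sq_le {q : ℝ} (hq : 0 < q) (z : E) :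
    ∫⁻ u, ENNReal.ofReal (‖u‖⁻¹ * exp (-q * ‖z - u‖ ^ 2)) ∂μ ≤
      ∫⁻ u, ENNReal.ofReal (‖u‖⁻¹ * exp (-q * ‖u‖ ^ 2)) ∂μ := by
  have hf : RadiallyAntitone fun u : E ↦ ‖u‖ₑ⁻¹ := fun x y hxy ↦
    ENNReal.inv_le_inv.2 (by simpa only [ofReal_norm] using ENNReal.ofReal_le_ofReal hxy)
  have hg : RadiallyAntitone fun u : E ↦ exp (-q * ‖u‖ ^ 2) := fun x y hxy ↦
    exp_le_exp.2 <| by simp only [neg_mul, neg_le_neg_iff]; gcongr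
  calc ∫⁻ u, ENNReal.ofReal (‖u‖⁻¹ * exp (-q * ‖z - u‖ ^ 2)) ∂μ
      ≤ ∫⁻ u, ‖u‖ₑ⁻¹ * ENNReal.ofReal (exp (-q * ‖u - z‖ ^ 2)) ∂μ := by
        refine lintegral_mono fun u ↦ ?_
        rw [ENNReal.ofReal_mul (by positivity), norm_sub_rev, ← ofReal_norm]
        gcongr
        exact ENNReal.ofReal_inv_le
    _ ≤ ∫⁻ u, ‖u‖ₑ⁻¹ * ENNReal.ofReal (exp (-q * ‖u‖ ^ 2)) ∂μ :=
        lintegral_mul_comp_sub_le_of_radiallyAntitone hf (by fun_prop) hg (by fun_prop)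
          (fun u ↦ (exp_pos _).le) (integrable_exp_neg_mul_norm_sq μ hq) z
    _ = ∫⁻ u, ENNReal.ofReal (‖u‖⁻¹ * exp (-q * ‖u‖ ^ 2)) ∂μ := by
        refine lintegral_congr_ae ?_
        filter_upwards [compl_mem_ae_iff.2 (measure_singleton (0 : E))] with u (hu : u ≠ 0)
        rw [ENNReal.ofReal_mul (by positivity), ENNReal.ofReal_inv_of_pos (norm_pos_iff.2 hu),
          ofReal_norm]

end HaarMeasure

theorem integrable_inv_norm_mul_exp_neg_mul_norm_sq {q : ℝ} (hq : 0 < q) :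
    Integrable (fun u : E3 ↦ ‖u‖⁻¹ * exp (-q * ‖u‖ ^ 2)) := by
  rw [integrable_fun_norm_addHaar volume (f := fun y ↦ y⁻¹ * exp (-q * y ^ 2))]
  refine (integrableOn_rpow_mul_exp_neg_mul_sq hq (s := 1) (by norm_num)).congr_fun
    (fun y (hy : 0 < y) ↦ ?_) measurableSet_Ioi
  simp only [rpow_one, neg_mul, finrank_euclideanSpace, Fintype.card_fin, Nat.add_one_sub_one,
    smul_eq_mul]
  field_simp

theorem integral_inv_norm_mul_exp_neg_mul_norm_sq {q : ℝ} (hq : 0 < q) :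
    ∫ u : E3, ‖u‖⁻¹ * exp (-q * ‖u‖ ^ 2) = 2 * π / q := by
  have hradial : ∫ y in Ioi (0 : ℝ), y ^ (finrank ℝ E3 - 1) • (y⁻¹ * exp (-q * y ^ 2)) =
      ∫ y in Ioi (0 : ℝ), y ^ (1 : ℝ) * exp (-q * y ^ (2 : ℝ)) := by
    refine setIntegral_congr_fun measurableSet_Ioi fun y (hy : 0 < y) ↦ ?_
    simp only [finrank_euclideanSpace, Fintype.card_fin, Nat.add_one_sub_one, smul_eq_mul,
      rpow_one, rpow_ofNat]
    field_simp
  rw [integral_fun_norm_addHaar volume (f := fun y ↦ y⁻¹ * exp (-q * y ^ 2)), hradial,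
    integral_rpow_mul_exp_neg_mul_rpow two_pos (by norm_num) hq, Measure.real,
    EuclideanSpace.volume_ball_fin_three, ENNReal.ofReal_one, one_pow, one_mul,
    ENNReal.toReal_ofReal (by positivity), finrank_euclideanSpace, Fintype.card_fin]
  norm_num [rpow_neg_one]
  ring

theorem two_mul_pi_div_le_four_mul_pi_add_pi_div_rpow {q : ℝ} (hq : 0 < q) :
    2 * π / q ≤ 4 * π + π / q ^ ((3 : ℝ) / 2) := by
  obtain ⟨s, hs, rfl⟩ : ∃ s : ℝ, 0 < s ∧ s ^ 2 = q := ⟨√q, sqrt_pos.2 hq, sq_sqrt hq.le⟩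
  have hpow : (s ^ 2) ^ ((3 : ℝ) / 2) = s ^ 3 := by
    rw [← rpow_natCast, ← rpow_mul hs.le]; norm_num
  -- `4s³ - 2s + 1 = 4s(s - 1/2)² + 4(s - 3/8)² + 7/16`
  have key : 2 * s ≤ 4 * s ^ 3 + 1 := by
    nlinarith [mul_nonneg hs.le (sq_nonneg (s - 1 / 2)), sq_nonneg (s - 3 / 8)]
  calc 2 * π / s ^ 2 = π * (2 * s) / s ^ 3 := by field_simp
    _ ≤ π * (4 * s ^ 3 + 1) / s ^ 3 := by gcongr
    _ = 4 * π + π / ((s ^ 2) ^ ((3 : ℝ) / 2)) := by rw [hpow]; field_simp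

theorem inverse_norm_gaussian_integral_bound (q : ℝ) (hq : 0 < q) (z : E3) :
    ∫ u : E3, ‖u‖⁻¹ * Real.exp (-q * ‖z - u‖ ^ 2) ≤
      4 * π + π / q ^ ((3 : ℝ) / 2) := by
  rw [integral_eq_lintegral_of_nonneg_ae (.of_forall fun u ↦ by positivity) (by fun_prop)]
  refine ENNReal.toReal_le_of_le_ofReal (by positivity) ?_
  calc _ ≤ ∫⁻ u : E3, ENNReal.ofReal (‖u‖⁻¹ * exp (-q * ‖u‖ ^ 2)) :=
        lintegral_inv_norm_mul_exp_neg_mul_norm_sub_sq_le volume hq z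
    _ = ENNReal.ofReal (2 * π / q) := by
        rw [← integral_inv_norm_mul_exp_neg_mul_norm_sq hq, ofReal_integral_eq_lintegral_ofReal
          (integrable_inv_norm_mul_exp_neg_mul_norm_sq hq) (.of_forall fun u ↦ by positivity)]
    _ ≤ ENNReal.ofReal (4 * π + π / q ^ ((3 : ℝ) / 2)) :=
        ENNReal.ofReal_le_ofReal (two_mul_pi_div_le_four_mul_pi_add_pi_div_rpow hq)
end
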